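/- Let C ⊆ B(H) be a C*-subalgebra acting nondegenerately on a complex Hilbert space H, let C⊗K ⊆ B(ℓ²(ℕ,H)) be the closed linear span of {E_{ij}(c) : c ∈ C, i,j ∈ ℕ}, and let M(C⊗K) denote the idealizer of C⊗K in B(ℓ²(ℕ,H)). Then Z(M(C⊗K)) = Z(M(C)) ⊗ ℂI; that is, the center of the idealizer of C⊗K equals {S⊗I : S ∈ Z(M(C))}, where M(C) is the idealizer of C in B(H). -/

import Mathlib

noncomputable section

open scoped ENNReal

variable {H : Type} [NormedAddCommGroup H] [InnerProductSpace ℂ H] [CompleteSpace H]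

abbrev L2 (H : Type) [NormedAddCommGroup H] [InnerProductSpace ℂ H] : Type :=
  lp (fun _ : ℕ => H) 2

theorem lp_single_add (i : ℕ) (a b : H) :
    lp.single (E := fun _ : ℕ => H) 2 i (a + b) = lp.single 2 i a + lp.single 2 i b := by
  apply lp.ext
  funext k
  by_cases h : k = i
  · subst h
    simp [lp.coeFn_add, lp.single_apply_self]
  · simp [lp.coeFn_add, lp.single_apply_ne 2 i _ h]

/-- The operator `E_{ij}(a)` on `ℓ²(ℕ, H)`: `(E_{ij}(a) x)_k = a (x_j)` if `k = i`, else `0`. -/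
def Eij (a : H →L[ℂ] H) (i j : ℕ) : L2 H →L[ℂ] L2 H :=
  LinearMap.mkContinuous
    { toFun := fun x => lp.single 2 i (a (x j))
      map_add' := fun x y => by
        dsimp only
        rw [lp.coeFn_add, Pi.add_apply, map_add, lp_single_add]
      map_smul' := fun c x => by
        dsimp only
        rw [lp.coeFn_smul, Pi.smul_apply, map_smul, lp.single_smul]
        rfl }
    ‖a‖ (fun x => by
      have h1 : ‖lp.single (E := fun _ : ℕ => H) 2 i (a (x j))‖ = ‖a (x j)‖ := by
        simpa using lp.norm_single (p := 2) (by norm_num) (fun _ : ℕ => a (x j)) i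
      calc ‖lp.single (E := fun _ : ℕ => H) 2 i (a (x j))‖ = ‖a (x j)‖ := h1
        _ ≤ ‖a‖ * ‖x j‖ := a.le_opNorm _
        _ ≤ ‖a‖ * ‖x‖ := by
            gcongr
            exact lp.norm_apply_le_norm (by norm_num) x j)

@[simp] theorem Eij_apply (a : H →L[ℂ] H) (i j : ℕ) (x : L2 H) :
    Eij a i j x = lp.single 2 i (a (x j)) := rfl

theorem amplify_memℓp (S : H →L[ℂ] H) (x : L2 H) : Memℓp (fun k => S (x k)) 2 := by
  have ht : (0 : ℝ) < (2 : ℝ≥0∞).toReal := by norm_num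
  apply memℓp_gen
  have hx : Summable fun k => ‖x k‖ ^ (2 : ℝ≥0∞).toReal := (lp.memℓp x).summable ht
  refine Summable.of_nonneg_of_le (fun k => Real.rpow_nonneg (norm_nonneg _) _)
    (fun k => ?_) (hx.mul_left (‖S‖ ^ (2 : ℝ≥0∞).toReal))
  calc ‖S (x k)‖ ^ (2 : ℝ≥0∞).toReal
      ≤ (‖S‖ * ‖x k‖) ^ (2 : ℝ≥0∞).toReal :=
        Real.rpow_le_rpow (norm_nonneg _) (S.le_opNorm _) ht.le
    _ = ‖S‖ ^ (2 : ℝ≥0∞).toReal * ‖x k‖ ^ (2 : ℝ≥0∞).toReal :=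
        Real.mul_rpow (norm_nonneg _) (norm_nonneg _)

/-- The amplification `S ⊗ I` on `ℓ²(ℕ, H)`: `((S ⊗ I) x)_k = S (x_k)`. -/
def amplify (S : H →L[ℂ] H) : L2 H →L[ℂ] L2 H :=
  LinearMap.mkContinuous
    { toFun := fun x => (⟨fun k => S (x k), amplify_memℓp S x⟩ : L2 H)
      map_add' := fun x y => by
        apply lp.ext
        funext k
        show S ((x + y) k) = (_ + _ : L2 H) k
        rw [lp.coeFn_add, lp.coeFn_add, Pi.add_apply, Pi.add_apply, map_add]
      map_smul' := fun c x => by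
        apply lp.ext
        funext k
        show S ((c • x) k) = (c • _ : L2 H) k
        rw [lp.coeFn_smul, lp.coeFn_smul, Pi.smul_apply, Pi.smul_apply, map_smul] }
    ‖S‖ (fun x => by
      dsimp only
      have ht : (0 : ℝ) < (2 : ℝ≥0∞).toReal := by norm_num
      set t := (2 : ℝ≥0∞).toReal with htdef
      rw [← Real.rpow_le_rpow_iff (norm_nonneg _) (mul_nonneg (norm_nonneg S) (norm_nonneg x)) ht,
        Real.mul_rpow (norm_nonneg S) (norm_nonneg x), lp.norm_rpow_eq_tsum ht,
        lp.norm_rpow_eq_tsum ht x, ← tsum_mul_left]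
      have hsum1 : Summable fun k => ‖S (x k)‖ ^ t :=
        ((amplify_memℓp S x).summable ht)
      have hsum2 : Summable fun k => ‖S‖ ^ t * ‖x k‖ ^ t :=
        ((lp.memℓp x).summable ht).mul_left _
      refine Summable.tsum_le_tsum (fun k => ?_) hsum1 hsum2
      calc ‖S (x k)‖ ^ t ≤ (‖S‖ * ‖x k‖) ^ t :=
            Real.rpow_le_rpow (norm_nonneg _) (S.le_opNorm _) ht.le
        _ = ‖S‖ ^ t * ‖x k‖ ^ t := Real.mul_rpow (norm_nonneg _) (norm_nonneg _))

@[simp] theorem amplify_apply (S : H →L[ℂ] H) (x : L2 H) (k : ℕ) :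
    amplify S x k = S (x k) := rfl

/-- The commutant `S' := {T : T s = s T for all s ∈ S}` of a set. -/
def commutant {R : Type*} [Mul R] (S : Set R) : Set R :=
  {T | ∀ s ∈ S, T * s = s * T}

/-- The center `Z(M) := {T ∈ M : T S = S T for all S ∈ M}` of a set. -/
def centerSet {R : Type*} [Mul R] (M : Set R) : Set R :=
  M ∩ commutant M

/-- The idealizer `{T : T C ⊆ C and C T ⊆ C}` of a set, which for a nondegenerately acting
C*-subalgebra of `B(H)` realizes its multiplier algebra `M(C)`. -/
def idealizer {R : Type*} [Mul R] (C : Set R) : Set R :=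
  {T | ∀ c ∈ C, T * c ∈ C ∧ c * T ∈ C}

/-- `A ⊗ K`: the closed linear span of the operators `E_{ij}(a)`, `a ∈ A`, `i j : ℕ`,
inside `B(ℓ²(ℕ, H))`. -/
def tensorK (A : Set (H →L[ℂ] H)) : Set (L2 H →L[ℂ] L2 H) :=
  closure (↑(Submodule.span ℂ
    {T : L2 H →L[ℂ] L2 H | ∃ a ∈ A, ∃ i j : ℕ, T = Eij a i j}) : Set (L2 H →L[ℂ] L2 H))

/-!
Read operators on `ℓ²(ℕ, H)` as infinite block matrices `(T_{kl})` with `T_{kl} ∈ B(H)`. If `T`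
commutes with every `E_{ij}(c)`, comparing entries gives `T_{ki} c = 0` for `k ≠ i` and
`T_{ii} c = c T_{jj}`, so by nondegeneracy `T = S ⊗ I` with `S = T_{00}`. Since `C` is closed, the
entries of any element of `M(C ⊗ K)` lie in `M(C)`, and conversely `S ⊗ I ∈ M(C ⊗ K)` for
`S ∈ M(C)`; these two facts move centrality back and forth between `M(C)` and `M(C ⊗ K)`.
-/

section

omit [CompleteSpace H]

def entry (i j : ℕ) : (L2 H →L[ℂ] L2 H) →L[ℂ] H →L[ℂ] H :=
  (ContinuousLinearMap.postcomp H (lp.evalCLM ℂ (fun _ : ℕ => H) 2 i)).comp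
    (ContinuousLinearMap.precomp (L2 H) (lp.singleContinuousLinearMap ℂ (fun _ : ℕ => H) 2 j))

@[simp] theorem entry_apply (i j : ℕ) (T : L2 H →L[ℂ] L2 H) (ξ : H) :
    entry i j T ξ = T (lp.single 2 j ξ) i := rfl

theorem ext_entry {T T' : L2 H →L[ℂ] L2 H} (h : ∀ i j, entry i j T = entry i j T') : T = T' :=
  lp.ext_continuousLinearMap (by norm_num) fun j => ContinuousLinearMap.ext fun ξ =>
    lp.ext <| funext fun i => DFunLike.congr_fun (h i j) ξ

def IsNondegenerate (A : Set (H →L[ℂ] H)) : Prop :=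
  Dense (↑(Submodule.span ℂ {x : H | ∃ c ∈ A, ∃ ξ : H, x = c ξ}) : Set H)

theorem IsNondegenerate.ext {A : Set (H →L[ℂ] H)} (hA : IsNondegenerate A) {X Y : H →L[ℂ] H}
    (h : ∀ c ∈ A, X * c = Y * c) : X = Y :=
  ContinuousLinearMap.ext_on hA <| by
    rintro _ ⟨c, hc, ξ, rfl⟩
    exact DFunLike.congr_fun (h c hc) ξ

end

theorem amplify_single (S : H →L[ℂ] H) (i : ℕ) (ξ : H) :
    amplify S (lp.single 2 i ξ) = lp.single 2 i (S ξ) := by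
  ext k
  by_cases h : k = i <;> simp [h, lp.single_apply]

theorem amplify_mul (S R : H →L[ℂ] H) : amplify (S * R) = amplify S * amplify R := rfl

theorem entry_amplify (S : H →L[ℂ] H) (i j : ℕ) :
    entry i j (amplify S) = if i = j then S else 0 := by
  ext ξ
  by_cases h : i = j <;> simp [h, lp.single_apply]

theorem amplify_injective : Function.Injective (amplify (H := H)) := fun S R h => by
  simpa [entry_amplify] using congrArg (entry 0 0) h

theorem entry_amplify_mul (S : H →L[ℂ] H) (T : L2 H →L[ℂ] L2 H) (i j : ℕ) :
    entry i j (amplify S * T) = S * entry i j T := rfl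

theorem entry_mul_amplify (T : L2 H →L[ℂ] L2 H) (S : H →L[ℂ] H) (i j : ℕ) :
    entry i j (T * amplify S) = entry i j T * S := by
  ext ξ
  simp [amplify_single]

theorem entry_Eij (a : H →L[ℂ] H) (i j k l : ℕ) :
    entry k l (Eij a i j) = if k = i ∧ l = j then a else 0 := by
  ext ξ
  by_cases hk : k = i <;> by_cases hl : l = j <;> simp [hk, hl, lp.single_apply]

theorem entry_mul_Eij (T : L2 H →L[ℂ] L2 H) (a : H →L[ℂ] H) (i j k l : ℕ) :
    entry k l (T * Eij a i j) = if l = j then entry k i T * a else 0 := by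
  ext ξ
  by_cases hl : l = j <;> simp [hl, lp.single_apply]

theorem entry_Eij_mul (a : H →L[ℂ] H) (T : L2 H →L[ℂ] L2 H) (i j k l : ℕ) :
    entry k l (Eij a i j * T) = if k = i then a * entry j l T else 0 := by
  ext ξ
  by_cases hk : k = i <;> simp [hk, lp.single_apply]

theorem Eij_mul_Eij (a b : H →L[ℂ] H) (i j k l : ℕ) :
    Eij a i j * Eij b k l = if j = k then Eij (a * b) i l else 0 := by
  refine ext_entry fun p q => ?_
  rw [entry_Eij_mul, entry_Eij]
  split_ifs <;> simp_all [entry_Eij]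

theorem amplify_mul_Eij (S a : H →L[ℂ] H) (i j : ℕ) :
    amplify S * Eij a i j = Eij (S * a) i j :=
  ContinuousLinearMap.ext fun x => amplify_single S i (a (x j))

theorem Eij_mul_amplify (a S : H →L[ℂ] H) (i j : ℕ) :
    Eij a i j * amplify S = Eij (a * S) i j := rfl

theorem eq_amplify_entry_of_commute_Eij {A : Set (H →L[ℂ] H)} (hA : IsNondegenerate A)
    {T : L2 H →L[ℂ] L2 H} (hT : ∀ c ∈ A, ∀ i j, Commute T (Eij c i j)) :
    T = amplify (entry 0 0 T) := by
  have hcomm : ∀ c ∈ A, ∀ i j k, entry k i T * c = if k = i then c * entry j j T else 0 :=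
    fun c hc i j k => by
      simpa [entry_mul_Eij, entry_Eij_mul] using congrArg (entry k j) (hT c hc i j).eq
  refine ext_entry fun k i => hA.ext fun c hc => ?_
  rw [hcomm c hc i 0 k, entry_amplify]
  split_ifs
  · simpa using (hcomm c hc 0 0 0).symm
  · simp

theorem commute_amplify_of_commute_entry {S : H →L[ℂ] H} {T : L2 H →L[ℂ] L2 H}
    (h : ∀ i j, Commute S (entry i j T)) : Commute (amplify S) T :=
  ext_entry fun i j => by rw [entry_amplify_mul, entry_mul_amplify, (h i j).eq]

theorem Eij_mem_tensorK {A : Set (H →L[ℂ] H)} {a : H →L[ℂ] H} (ha : a ∈ A) (i j : ℕ) :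
    Eij a i j ∈ tensorK A :=
  subset_closure (Submodule.subset_span ⟨a, ha, i, j, rfl⟩)

theorem zero_mem_tensorK (A : Set (H →L[ℂ] H)) : (0 : L2 H →L[ℂ] L2 H) ∈ tensorK A :=
  subset_closure (zero_mem _)

theorem map_mem_of_mem_tensorK {F : Type*} [AddCommGroup F] [Module ℂ F] [TopologicalSpace F]
    (L : (L2 H →L[ℂ] L2 H) →L[ℂ] F) {N : Submodule ℂ F} (hN : IsClosed (N : Set F))
    {A : Set (H →L[ℂ] H)} (hA : ∀ a ∈ A, ∀ i j, L (Eij a i j) ∈ N)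
    {T : L2 H →L[ℂ] L2 H} (hT : T ∈ tensorK A) : L T ∈ N := by
  have hspan : Submodule.span ℂ {T | ∃ a ∈ A, ∃ i j : ℕ, T = Eij a i j} ≤
      N.comap (L : (L2 H →L[ℂ] L2 H) →ₗ[ℂ] F) :=
    Submodule.span_le.2 <| by
      rintro _ ⟨a, ha, i, j, rfl⟩
      exact hA a ha i j
  exact (hN.preimage L.continuous).closure_subset_iff.2 hspan hT

theorem map_mem_tensorK (L : (L2 H →L[ℂ] L2 H) →L[ℂ] L2 H →L[ℂ] L2 H) {A : Set (H →L[ℂ] H)}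
    (hA : ∀ a ∈ A, ∀ i j, L (Eij a i j) ∈ tensorK A) {T : L2 H →L[ℂ] L2 H}
    (hT : T ∈ tensorK A) : L T ∈ tensorK A :=
  map_mem_of_mem_tensorK L (Submodule.isClosed_topologicalClosure _) hA hT

theorem amplify_mem_idealizer {A : Set (H →L[ℂ] H)} {S : H →L[ℂ] H} (hS : S ∈ idealizer A) :
    amplify S ∈ idealizer (tensorK A) := fun _ hX =>
  ⟨map_mem_tensorK (ContinuousLinearMap.mul ℂ _ (amplify S)) (fun a ha i j => by
      rw [ContinuousLinearMap.mul_apply', amplify_mul_Eij]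
      exact Eij_mem_tensorK (hS a ha).1 i j) hX,
    map_mem_tensorK ((ContinuousLinearMap.mul ℂ _).flip (amplify S)) (fun a ha i j => by
      rw [ContinuousLinearMap.flip_apply, ContinuousLinearMap.mul_apply', Eij_mul_amplify]
      exact Eij_mem_tensorK (hS a ha).2 i j) hX⟩

section

variable {S : Type*} [SetLike S (H →L[ℂ] H)] {A : S}

theorem mul_mem_tensorK [MulMemClass S (H →L[ℂ] H)] {X Y : L2 H →L[ℂ] L2 H}
    (hX : X ∈ tensorK (A : Set (H →L[ℂ] H))) (hY : Y ∈ tensorK (A : Set (H →L[ℂ] H))) :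
    X * Y ∈ tensorK (A : Set (H →L[ℂ] H)) := by
  have hEY : ∀ a ∈ A, ∀ i j, Eij a i j * Y ∈ tensorK (A : Set (H →L[ℂ] H)) := fun a ha i j =>
    map_mem_tensorK (ContinuousLinearMap.mul ℂ _ (Eij a i j)) (fun b hb k l => by
      rw [ContinuousLinearMap.mul_apply', Eij_mul_Eij]
      split_ifs
      exacts [Eij_mem_tensorK (mul_mem ha hb) i l, zero_mem_tensorK _]) hY
  exact map_mem_tensorK ((ContinuousLinearMap.mul ℂ _).flip Y) hEY hX

variable (A) in
theorem tensorK_subset_idealizer [MulMemClass S (H →L[ℂ] H)] :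
    tensorK (A : Set (H →L[ℂ] H)) ⊆ idealizer (tensorK (A : Set (H →L[ℂ] H))) :=
  fun _ hX _ hY => ⟨mul_mem_tensorK hX hY, mul_mem_tensorK hY hX⟩

variable [AddSubmonoidClass S (H →L[ℂ] H)] [SMulMemClass S ℂ (H →L[ℂ] H)]

theorem entry_mem_of_mem_tensorK (hA : IsClosed (A : Set (H →L[ℂ] H))) {T : L2 H →L[ℂ] L2 H}
    (hT : T ∈ tensorK (A : Set (H →L[ℂ] H))) (i j : ℕ) : entry i j T ∈ A :=
  map_mem_of_mem_tensorK (N := Submodule.ofClass A) (entry i j) hA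
    (fun a ha k l => by rw [entry_Eij]; split_ifs; exacts [ha, zero_mem A]) hT

theorem entry_mem_idealizer (hA : IsClosed (A : Set (H →L[ℂ] H))) {T : L2 H →L[ℂ] L2 H}
    (hT : T ∈ idealizer (tensorK (A : Set (H →L[ℂ] H)))) (i j : ℕ) :
    entry i j T ∈ idealizer (A : Set (H →L[ℂ] H)) := fun c hc => by
  have hTc := entry_mem_of_mem_tensorK hA (hT _ (Eij_mem_tensorK hc j 0)).1 i 0
  have hcT := entry_mem_of_mem_tensorK hA (hT _ (Eij_mem_tensorK hc 0 i)).2 0 j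
  rw [entry_mul_Eij, if_pos rfl] at hTc
  rw [entry_Eij_mul, if_pos rfl] at hcT
  exact ⟨hTc, hcT⟩

end

/-- For a nondegenerately acting C*-subalgebra `C ⊆ B(H)`, identifying
multiplier algebras with idealizers, one has `Z(M(C ⊗ K)) = Z(M(C)) ⊗ ℂI`, i.e. the center of
the idealizer of `C ⊗ K` is `{S ⊗ I : S ∈ Z(M(C))}`. -/
theorem stable_iso_stmt3
    (C : NonUnitalStarSubalgebra ℂ (H →L[ℂ] H))
    (hC : IsClosed (C : Set (H →L[ℂ] H)))
    (hnondeg : Dense (↑(Submodule.span ℂ {x : H | ∃ c ∈ C, ∃ ξ : H, x = c ξ}) : Set H)) :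
    centerSet (idealizer (tensorK (C : Set (H →L[ℂ] H)))) =
      amplify '' centerSet (idealizer (C : Set (H →L[ℂ] H))) := by
  refine Set.Subset.antisymm ?_ ?_
  · rintro T ⟨hTM, hTZ⟩
    have hT : T = amplify (entry 0 0 T) :=
      eq_amplify_entry_of_commute_Eij hnondeg fun c hc i j =>
        hTZ _ (tensorK_subset_idealizer C (Eij_mem_tensorK hc i j))
    refine ⟨entry 0 0 T, ⟨entry_mem_idealizer hC hTM 0 0, fun R hR => amplify_injective ?_⟩,
      hT.symm⟩
    rw [amplify_mul, amplify_mul, ← hT]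
    exact hTZ _ (amplify_mem_idealizer hR)
  · rintro _ ⟨S, ⟨hSM, hSZ⟩, rfl⟩
    exact ⟨amplify_mem_idealizer hSM, fun T hT =>
      commute_amplify_of_commute_entry fun i j => hSZ _ (entry_mem_idealizer hC hT i j)⟩
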